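/- Let n be an odd square-free integer with at least three distinct prime factors, and let Γ be a finite connected pentavalent arc-transitive graph with exactly 4n vertices. If N is a minimal normal subgroup of Aut Γ and N is solvable, then N is cyclic of prime order. -/

import Mathlib

/-!
A solvable minimal normal subgroup `N` of `Aut Γ` is abelian, hence a `p`-group: a Sylow
subgroup of `N` is characteristic in `N`, so normal in `Aut Γ`. As `Γ` is arc-transitive of prime
valency 5, the neighbours of a vertex are spread evenly over the `N`-orbits, so they lie either
all in one orbit or in five distinct ones. In the first case (and also when some edge lies inside
an orbit) connectivity leaves at most two `N`-orbits, of equal size, so `4n ∣ 2p^k`, impossible for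
odd `n > 1`. In the second case `N` acts semiregularly and `Γ` covers the normal quotient `Γ_N`,
which is again pentavalent. Then `p^k ∣ 4n`, and square-freeness leaves `|N| = p` or `|N| = 4`;
the latter would make `Γ_N` a pentavalent graph on an odd number `n` of vertices.
-/

open MulAction
open scoped Pointwise

namespace Nat.Prime

variable {n p k : ℕ}

theorem eq_one_of_four_mul_dvd_two_mul_pow (hp : p.Prime) (hn : Odd n)
    (h : 4 * n ∣ 2 * p ^ k) : n = 1 := by
  have h2n : 2 * n ∣ p ^ k := Nat.dvd_of_mul_dvd_mul_left two_pos (by rwa [← mul_assoc])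
  obtain rfl : p = 2 := ((Nat.prime_dvd_prime_iff_eq Nat.prime_two hp).mp
    (Nat.prime_two.dvd_of_dvd_pow (dvd_of_mul_right_dvd h2n))).symm
  exact ((Nat.coprime_two_right.mpr hn).pow_right k).eq_one_of_dvd (dvd_of_mul_left_dvd h2n)

theorem pow_eq_four_of_dvd_four_mul (hp : p.Prime) (hn : Odd n) (hsf : Squarefree n)
    (hk : 2 ≤ k) (h : p ^ k ∣ 4 * n) : p ^ k = 4 := by
  rcases eq_or_ne p 2 with rfl | hp2
  · have : 2 ^ k ∣ 2 ^ 2 := ((Nat.coprime_two_left.mpr hn).pow_left k).dvd_of_dvd_mul_right h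
    rw [le_antisymm ((Nat.pow_dvd_pow_iff_le_right one_lt_two).mp this) hk]
    rfl
  · have hp4 : (p ^ k).Coprime (2 ^ 2) :=
      ((Nat.coprime_primes hp Nat.prime_two).mpr hp2).pow k 2
    have hpp : p * p ∣ n := (pow_two p ▸ pow_dvd_pow p hk).trans (hp4.dvd_of_dvd_mul_left h)
    exact absurd (Nat.isUnit_iff.mp (hsf p hpp)) hp.ne_one

end Nat.Prime

namespace Subgroup

variable {G : Type*} [Group G] {N : Subgroup G}

theorem isMulCommutative_of_minimal_normal [N.Normal] [Group.IsSolvable N]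
    (hmin : ∀ M : Subgroup G, M.Normal → M ≤ N → M ≠ ⊥ → M = N) : IsMulCommutative N := by
  rw [← commutator_eq_bot_iff]
  by_contra hne
  have hmap : (_root_.commutator N).map N.subtype = N := hmin _ inferInstance (map_subtype_le _)
    ((map_eq_bot_iff_of_injective _ N.subtype_injective).not.mpr hne)
  have htop : _root_.commutator N = ⊤ := by
    rw [← map_subtype_inj, hmap, ← MonoidHom.range_eq_map, range_subtype]
  exact (Group.IsSolvable.commutator_lt_of_ne_bot (H := ⊤) (by simpa [htop] using hne)).ne htop

theorem isPGroup_of_minimal_normal [Finite G] [N.Normal] [Group.IsSolvable N]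
    (hmin : ∀ M : Subgroup G, M.Normal → M ≤ N → M ≠ ⊥ → M = N)
    {p : ℕ} [Fact p.Prime] (hp : p ∣ Nat.card N) : IsPGroup p N := by
  have := isMulCommutative_of_minimal_normal hmin
  obtain ⟨P⟩ : Nonempty (Sylow p N) := inferInstance
  have := P.characteristic_of_normal inferInstance
  have hP : (P : Subgroup N).map N.subtype = N :=
    hmin _ inferInstance (map_subtype_le _)
      ((map_eq_bot_iff_of_injective _ N.subtype_injective).not.mpr (P.ne_bot_of_dvd_card hp))
  refine P.isPGroup'.of_surjective (P : Subgroup N).subtype ?_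
  rw [← MonoidHom.range_eq_top, range_subtype, ← map_subtype_inj, hP, ← MonoidHom.range_eq_map,
    range_subtype]

end Subgroup

namespace MulAction

theorem card_dvd_two_mul_card_of_forall_mem_orbit {G X : Type*} [Group G] [MulAction G X]
    [Finite X] {N : Subgroup G} [N.Normal] [Finite N] (g : G) {x : X}
    (h : ∀ y, y ∈ orbit N x ∨ y ∈ orbit N (g • x)) : Nat.card X ∣ 2 * Nat.card N := by
  have hsize : (orbit N (g • x)).ncard = (orbit N x).ncard := by
    rw [← smul_orbit_eq_orbit_smul, Set.ncard_smul_set]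
  have horbit : (orbit N x).ncard ∣ Nat.card N := by
    rw [← index_stabilizer]
    exact Subgroup.index_dvd_card _
  have hcover : Set.univ = orbit N x ∪ orbit N (g • x) := Set.eq_univ_of_forall h |>.symm
  have hX : Nat.card X ∣ 2 * (orbit N x).ncard := by
    rw [← Set.ncard_univ, hcover]
    rcases orbit.eq_or_disjoint (G := N) x (g • x) with heq | hdisj
    · rw [← heq, Set.union_self]
      exact dvd_mul_left _ _
    · rw [Set.ncard_union_eq hdisj, hsize, two_mul]
  exact hX.trans (mul_dvd_mul_left 2 horbit)

end MulAction

namespace SimpleGraph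

variable {V : Type*} {Γ : SimpleGraph V}

instance Iso.applyMulAction : MulAction (Γ ≃g Γ) V where
  smul g v := g v
  one_smul _ := rfl
  mul_smul _ _ _ := rfl

@[simp] lemma Iso.smul_def (g : Γ ≃g Γ) (v : V) : g • v = g v := rfl

instance [Finite V] : Finite (Γ ≃g Γ) := Finite.of_injective _ RelIso.toEquiv_injective

lemma Iso.neighborSet_smul (g : Γ ≃g Γ) (v : V) :
    Γ.neighborSet (g • v) = g • Γ.neighborSet v := by
  ext u
  rw [Set.mem_smul_set_iff_inv_smul_mem, mem_neighborSet, mem_neighborSet, iff_comm,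
    ← g.map_adj_iff]
  simp

def IsArcTransitive (Γ : SimpleGraph V) : Prop :=
  ∀ ⦃u v u' v' : V⦄, Γ.Adj u v → Γ.Adj u' v' → ∃ g : Γ ≃g Γ, g u = u' ∧ g v = v'

theorem Connected.mem_of_forall_adj_mem (hconn : Γ.Connected) {S : Set V}
    (hS : ∀ ⦃a b⦄, Γ.Adj a b → a ∈ S → b ∈ S) {v : V} (hv : v ∈ S) (w : V) : w ∈ S := by
  obtain ⟨p⟩ := hconn v w
  induction p with
  | nil => exact hv
  | cons h _ ih => exact ih (hS h hv)

lemma ncard_neighborSet [LocallyFinite Γ] (v : V) : (Γ.neighborSet v).ncard = Γ.degree v := by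
  rw [← coe_neighborFinset, Set.ncard_coe_finset, card_neighborFinset_eq_degree]

variable (N : Subgroup (Γ ≃g Γ))

theorem IsArcTransitive.ncard_neighborSet_inter_orbit_eq (harc : Γ.IsArcTransitive) [N.Normal]
    {v w v' w' : V} (h : Γ.Adj v w) (h' : Γ.Adj v' w') :
    (Γ.neighborSet v ∩ orbit N w).ncard = (Γ.neighborSet v' ∩ orbit N w').ncard := by
  obtain ⟨g, rfl, rfl⟩ := harc h h'
  rw [← Iso.smul_def, ← Iso.smul_def, Iso.neighborSet_smul, ← smul_orbit_eq_orbit_smul,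
    ← Set.smul_set_inter, Set.ncard_smul_set]

theorem IsArcTransitive.neighbors_separated_or_mem_orbit [LocallyFinite Γ]
    (harc : Γ.IsArcTransitive) [N.Normal] {d : ℕ} (hreg : Γ.IsRegularOfDegree d)
    (hd : d.Prime) :
    (∀ ⦃v u u'⦄, Γ.Adj v u → Γ.Adj v u' → u' ∈ orbit N u → u' = u) ∨
      ∀ ⦃v u u'⦄, Γ.Adj v u → Γ.Adj v u' → u' ∈ orbit N u := by
  classical
  by_cases hE : ∃ v w, Γ.Adj v w
  swap
  · exact Or.inl fun v u _ h => absurd ⟨v, u, h⟩ hE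
  obtain ⟨v₀, w₀, h₀⟩ := hE
  set m := (Γ.neighborSet v₀ ∩ orbit N w₀).ncard
  have hm : ∀ ⦃v w⦄, Γ.Adj v w → (Γ.neighborSet v ∩ orbit N w).ncard = m :=
    fun v w h => harc.ncard_neighborSet_inter_orbit_eq N h h₀
  -- the `N`-orbits cut the neighbourhood of `v₀` into pieces, all of size `m`
  have hdvd : m ∣ d := by
    rw [← hreg v₀, ← card_neighborFinset_eq_degree,
      Finset.card_eq_sum_card_image (Quotient.mk (orbitRel N V))]
    refine Finset.dvd_sum fun B hB => ?_
    obtain ⟨u, hu, rfl⟩ := Finset.mem_image.mp hB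
    rw [← hm ((mem_neighborFinset ..).mp hu), ← Set.ncard_coe_finset]
    refine dvd_of_eq (congrArg Set.ncard (Set.ext fun a => ?_))
    simp [Quotient.eq, orbitRel_apply]
  rcases (Nat.dvd_prime hd).mp hdvd with h1 | hd'
  · refine Or.inl fun v u u' hu hu' hu'u => ?_
    obtain ⟨a, ha⟩ := Set.ncard_eq_one.mp ((hm hu).trans h1)
    have h1 : u ∈ ({a} : Set V) := ha ▸ ⟨hu, mem_orbit_self u⟩
    have h2 : u' ∈ ({a} : Set V) := ha ▸ ⟨hu', hu'u⟩
    exact h2.trans h1.symm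
  · refine Or.inr fun v u u' hu hu' => ?_
    have : Γ.neighborSet v ∩ orbit N u = Γ.neighborSet v :=
      Set.eq_of_subset_of_ncard_le Set.inter_subset_left
        (by rw [hm hu, hd', ncard_neighborSet, hreg v])
    rw [← mem_neighborSet, ← this] at hu'
    exact hu'.2

theorem IsArcTransitive.mem_orbit_of_adj (harc : Γ.IsArcTransitive) [N.Normal] {u v : V}
    (huv : Γ.Adj u v) (hv : v ∈ orbit N u) ⦃a b : V⦄ (hab : Γ.Adj a b) : b ∈ orbit N a := by
  obtain ⟨g, rfl, rfl⟩ := harc huv hab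
  rw [← Iso.smul_def, ← Iso.smul_def, ← smul_orbit_eq_orbit_smul]
  exact Set.smul_mem_smul_set hv

theorem Connected.mem_orbit_or_mem_orbit (hconn : Γ.Connected)
    (h : ∀ ⦃v u u'⦄, Γ.Adj v u → Γ.Adj v u' → u' ∈ orbit N u) {u v : V} (huv : Γ.Adj u v)
    (w : V) : w ∈ orbit N u ∨ w ∈ orbit N v := by
  have step : ∀ ⦃a b c d : V⦄, Γ.Adj a b → Γ.Adj c d → c ∈ orbit N a → d ∈ orbit N b := by
    rintro a b c d hab hcd ⟨x, rfl⟩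
    have hd : Γ.Adj (x⁻¹ • x • a) (x⁻¹ • d) := (x⁻¹ : N).1.map_adj_iff.mpr hcd
    rw [inv_smul_smul] at hd
    simpa using mem_orbit_of_mem_orbit x (h hab hd)
  refine hconn.mem_of_forall_adj_mem (S := orbit N u ∪ orbit N v) ?_
    (Or.inl (mem_orbit_self u)) w
  rintro a b hab (ha | ha)
  · exact Or.inr (step huv hab ha)
  · exact Or.inl (step huv.symm hab ha)

theorem Connected.stabilizer_eq_bot (hconn : Γ.Connected)
    (h : ∀ ⦃v u u'⦄, Γ.Adj v u → Γ.Adj v u' → u' ∈ orbit N u → u' = u) (v : V) :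
    stabilizer N v = ⊥ := by
  refine (Subgroup.eq_bot_iff_forall _).mpr fun x hx => Subtype.ext (RelIso.ext fun w => ?_)
  refine hconn.mem_of_forall_adj_mem (S := {w | x • w = w}) (fun a b hab ha => ?_) hx w
  have hxb : Γ.Adj (x • a) (x • b) := (x : Γ ≃g Γ).map_adj_iff.mpr hab
  rw [show x • a = a from ha] at hxb
  exact h hab hxb (mem_orbit b x)

-- The normal quotient `Γ_N` is `Γ.quotient (orbitRel N V)`.
def quotient (Γ : SimpleGraph V) (s : Setoid V) : SimpleGraph (Quotient s) :=
  fromRel (Relation.Map Γ.Adj (Quotient.mk s) (Quotient.mk s))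

theorem neighborSet_quotient_orbitRel (hloop : ∀ ⦃u v⦄, Γ.Adj u v → v ∉ orbit N u) (v : V) :
    (Γ.quotient (orbitRel N V)).neighborSet (Quotient.mk _ v) =
      Quotient.mk _ '' Γ.neighborSet v := by
  have lift : ∀ ⦃a b' b⦄, Γ.Adj a b' → a ∈ orbit N v → b' ∈ orbit N b →
      ∃ u, Γ.Adj v u ∧ u ∈ orbit N b := by
    rintro a b' b hab ⟨x, rfl⟩ hb
    have hd : Γ.Adj (x⁻¹ • x • v) (x⁻¹ • b') := (x⁻¹ : N).1.map_adj_iff.mpr hab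
    rw [inv_smul_smul] at hd
    exact ⟨_, hd, mem_orbit_of_mem_orbit x⁻¹ hb⟩
  ext B
  induction B using Quotient.inductionOn with | h b => ?_
  simp only [quotient, mem_neighborSet, fromRel_adj, Relation.Map, Set.mem_image,
    Quotient.eq, orbitRel_apply]
  constructor
  · rintro ⟨-, ⟨a, b', hab, ha, hb⟩ | ⟨b', a, hba, hb, ha⟩⟩
    · exact lift hab ha hb
    · exact lift hba.symm ha hb
  · rintro ⟨u, hvu, hu⟩
    refine ⟨fun hvb => hloop hvu ?_, Or.inl ⟨v, u, hvu, mem_orbit_self v, hu⟩⟩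
    rwa [orbit_eq_iff.mpr (Quotient.exact hvb)]

theorem ncard_neighborSet_quotient_orbitRel (hloop : ∀ ⦃u v⦄, Γ.Adj u v → v ∉ orbit N u)
    (h : ∀ ⦃v u u'⦄, Γ.Adj v u → Γ.Adj v u' → u' ∈ orbit N u → u' = u) (v : V) :
    ((Γ.quotient (orbitRel N V)).neighborSet (Quotient.mk _ v)).ncard =
      (Γ.neighborSet v).ncard := by
  rw [neighborSet_quotient_orbitRel N hloop, Set.InjOn.ncard_image]
  intro u hu u' hu' huu'
  exact h hu' hu (Quotient.exact huu')

theorem IsArcTransitive.card_dvd_two_mul_or_quotient_ncard_neighborSet [Finite V]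
    [LocallyFinite Γ] (hconn : Γ.Connected) (harc : Γ.IsArcTransitive) {d : ℕ}
    (hreg : Γ.IsRegularOfDegree d) (hd : d.Prime) [N.Normal] :
    Nat.card V ∣ 2 * Nat.card N ∨
      Nat.card V = Nat.card (orbitRel.Quotient N V) * Nat.card N ∧
        ∀ v, ((Γ.quotient (orbitRel N V)).neighborSet (Quotient.mk _ v)).ncard = d := by
  obtain ⟨v₀⟩ := hconn.nonempty
  obtain ⟨w₀, h₀⟩ := (Γ.degree_pos_iff_exists_adj v₀).mp (hreg v₀ ▸ hd.pos)
  obtain ⟨g, hg, -⟩ := harc h₀ h₀.symm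
  have two_orbits (h : ∀ ⦃v u u'⦄, Γ.Adj v u → Γ.Adj v u' → u' ∈ orbit N u) :
      Nat.card V ∣ 2 * Nat.card N := by
    refine card_dvd_two_mul_card_of_forall_mem_orbit g (x := v₀) fun y => ?_
    rw [Iso.smul_def, hg]
    exact hconn.mem_orbit_or_mem_orbit N h h₀ y
  by_cases hloop : ∃ u v, Γ.Adj u v ∧ v ∈ orbit N u
  · obtain ⟨u, v, huv, hv⟩ := hloop
    have hall := harc.mem_orbit_of_adj N huv hv
    refine Or.inl (two_orbits fun a b b' hab hab' => ?_)
    rw [orbit_eq_iff.mpr (hall hab)]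
    exact hall hab'
  have hloop' : ∀ ⦃u v⦄, Γ.Adj u v → v ∉ orbit N u :=
    fun u v huv hv => hloop ⟨u, v, huv, hv⟩
  rcases harc.neighbors_separated_or_mem_orbit N hreg hd with hsep | hsame
  · refine Or.inr ⟨(Nat.card_congr (selfEquivOrbitsQuotientProd
      (hconn.stabilizer_eq_bot N hsep))).trans (Nat.card_prod _ _), fun v => ?_⟩
    rw [ncard_neighborSet_quotient_orbitRel N hloop' hsep, ncard_neighborSet, hreg v]
  · exact Or.inl (two_orbits hsame)

theorem even_card_mul_of_forall_ncard_neighborSet [Finite V] {d : ℕ}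
    (h : ∀ v, (Γ.neighborSet v).ncard = d) : Even (Nat.card V * d) := by
  classical
  have := Fintype.ofFinite V
  have hsum := Γ.sum_degrees_eq_twice_card_edges
  simp only [← ncard_neighborSet, h, Finset.sum_const, Finset.card_univ, smul_eq_mul] at hsum
  rw [Nat.card_eq_fintype_card, hsum]
  exact even_two_mul _

end SimpleGraph

open SimpleGraph in
theorem solvable_minimal_normal_subgroup_is_cyclic_of_prime_order
    {V : Type*} [Fintype V] (Γ : SimpleGraph V) [DecidableRel Γ.Adj]
    (n : ℕ) (hodd : Odd n) (hsf : Squarefree n)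
    (hcard : Fintype.card V = 4 * n)
    (hconn : Γ.Connected) (hdeg : ∀ v : V, Γ.degree v = 5)
    (harc : ∀ ⦃u v u' v' : V⦄, Γ.Adj u v → Γ.Adj u' v' →
      ∃ g : Γ ≃g Γ, g u = u' ∧ g v = v')
    (N : Subgroup (Γ ≃g Γ)) (hne : N ≠ ⊥) (hnorm : N.Normal)
    (hmin : ∀ M : Subgroup (Γ ≃g Γ), M.Normal → M ≤ N → M ≠ ⊥ → M = N)
    (hsol : IsSolvable N) :
    IsCyclic N ∧ ∃ r : ℕ, r.Prime ∧ Nat.card N = r := by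
  have : Group.IsSolvable N := hsol
  have hcardV : Nat.card V = 4 * n := Nat.card_eq_fintype_card.trans hcard
  have hn : n ≠ 1 := by
    rintro rfl
    obtain ⟨v⟩ := hconn.nonempty
    have := hdeg v ▸ Γ.degree_lt_card_verts v
    omega
  obtain ⟨p, hp, hpN⟩ := Nat.exists_prime_and_dvd (N.one_lt_card_iff_ne_bot.mpr hne).ne'
  have : Fact p.Prime := ⟨hp⟩
  obtain ⟨k, hk⟩ := (Subgroup.isPGroup_of_minimal_normal hmin hpN).exists_card_eq
  rcases IsArcTransitive.card_dvd_two_mul_or_quotient_ncard_neighborSet N hconn harc hdeg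
    Nat.prime_five with hsmall | ⟨hVQ, hdegQ⟩
  · exact absurd (hp.eq_one_of_four_mul_dvd_two_mul_pow hodd (hcardV ▸ hk ▸ hsmall)) hn
  have hk1 : k = 1 := by
    by_contra hk1
    have hk0 : k ≠ 0 := by
      rintro rfl
      rw [hk, pow_zero] at hpN
      exact hp.not_dvd_one hpN
    have h4 : p ^ k = 4 := hp.pow_eq_four_of_dvd_four_mul hodd hsf (by omega)
      ⟨_, hcardV ▸ hk ▸ hVQ.trans (mul_comm _ _)⟩
    have hQ : Nat.card (orbitRel.Quotient N V) = n := by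
      rw [hk, h4, hcardV] at hVQ
      omega
    have hparity := even_card_mul_of_forall_ncard_neighborSet (Quotient.ind hdegQ)
    rw [hQ] at hparity
    exact Nat.not_even_iff_odd.mpr (hodd.mul (by decide)) hparity
  have hNp : Nat.card N = p := by rw [hk, hk1, pow_one]
  exact ⟨isCyclic_of_prime_card hNp, p, hp, hNp⟩
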